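/- arXiv:1902.09586 — 2 statements merged into one kernel-verified Lean document; each statement's English description precedes it below -/
import Mathlib

section
/- In a single transaction T, for X ⊆ T and an extension Y = X ∪ {z} with z ∈ T and z ≻ x for all x ∈ X, the remaining positive utility bound holds: pu(Y,T) + rpu(Y,T) ≤ pu(X,T) + rpu(X,T). -/
/-!
Every summand of `rpu` is nonnegative, so `rpu` is antitone in the itemset. Adding `z ≻ X`
removes `z` from the remaining items: if `pr z > 0` its utility moves from `rpu` into `pu`,
and otherwise `pu` is unchanged while `rpu` can only drop.
-/

open Finset

/-- Positive utility of itemset `Z` inside a single transaction `T`. -/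
def puT {α : Type} [DecidableEq α] (pr : α → ℤ) (q : α → ℕ) (Z : Finset α) : ℤ :=
  ∑ i ∈ Z.filter (fun i => 0 < pr i), pr i * (q i : ℤ)

/-- Remaining positive utility of `Z` in transaction `T`. -/
def rpuT {α : Type} [DecidableEq α] [LinearOrder α] (T : Finset α)
    (pr : α → ℤ) (q : α → ℕ) (Z : Finset α) : ℤ :=
  ∑ i ∈ T.filter (fun i => (∀ x ∈ Z, x < i) ∧ 0 < pr i), pr i * (q i : ℤ)

section

variable {α : Type} [DecidableEq α] (pr : α → ℤ) (q : α → ℕ) {X : Finset α} {z : α}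

lemma puT_insert_of_pos (hpz : 0 < pr z) (hzX : z ∉ X) :
    puT pr q (insert z X) = pr z * q z + puT pr q X := by
  rw [puT, filter_insert, if_pos hpz, sum_insert (by simp [hzX]), puT]

lemma puT_insert_of_not_pos (hpz : ¬ 0 < pr z) : puT pr q (insert z X) = puT pr q X := by
  rw [puT, filter_insert, if_neg hpz, puT]

end

lemma filter_remaining_anti {α : Type} [LinearOrder α] (T : Finset α) (pr : α → ℤ)
    {Y Z : Finset α} (hYZ : Y ⊆ Z) :
    T.filter (fun i => (∀ x ∈ Z, x < i) ∧ 0 < pr i) ⊆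
      T.filter (fun i => (∀ x ∈ Y, x < i) ∧ 0 < pr i) :=
  monotone_filter_right T fun _ _ hi => ⟨fun x hx => hi.1 x (hYZ hx), hi.2⟩

section

variable {α : Type} [DecidableEq α] [LinearOrder α] (T : Finset α) (pr : α → ℤ) (q : α → ℕ)
  {X : Finset α} {z : α}

lemma sum_le_rpuT_of_subset {S Z : Finset α}
    (hS : S ⊆ T.filter (fun i => (∀ x ∈ Z, x < i) ∧ 0 < pr i)) :
    ∑ i ∈ S, pr i * (q i : ℤ) ≤ rpuT T pr q Z :=
  sum_le_sum_of_subset_of_nonneg hS fun _ hi _ =>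
    mul_nonneg (mem_filter.1 hi).2.2.le (Int.natCast_nonneg _)

lemma rpuT_antitone : Antitone (rpuT T pr q) := fun _ _ hYZ =>
  sum_le_rpuT_of_subset T pr q (filter_remaining_anti T pr hYZ)

lemma add_rpuT_insert_le (hzT : z ∈ T) (hpz : 0 < pr z) (hz : ∀ x ∈ X, x < z) :
    pr z * q z + rpuT T pr q (insert z X) ≤ rpuT T pr q X := by
  have hz_gone : z ∉ T.filter (fun i => (∀ x ∈ insert z X, x < i) ∧ 0 < pr i) :=
    fun h => lt_irrefl z ((mem_filter.1 h).2.1 z (mem_insert_self z X))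
  rw [rpuT, ← sum_insert (f := fun i => pr i * (q i : ℤ)) hz_gone]
  refine sum_le_rpuT_of_subset T pr q (insert_subset ?_ ?_)
  · exact mem_filter.2 ⟨hzT, hz, hpz⟩
  · exact filter_remaining_anti T pr (subset_insert z X)

end

theorem stmt7_general {α : Type} [DecidableEq α] [LinearOrder α] (T : Finset α)
    (pr : α → ℤ) (q : α → ℕ)
    (X : Finset α) (z : α) (hzT : z ∈ T)
    (hz : ∀ x ∈ X, x < z) :
    puT pr q (insert z X) + rpuT T pr q (insert z X) ≤
      puT pr q X + rpuT T pr q X := by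
  by_cases hpz : 0 < pr z
  · have hzX : z ∉ X := fun h => lt_irrefl z (hz z h)
    rw [puT_insert_of_pos pr q hpz hzX]
    linarith [add_rpuT_insert_le T pr q hzT hpz hz]
  · rw [puT_insert_of_not_pos pr q hpz]
    linarith [rpuT_antitone T pr q (subset_insert z X)]

theorem stmt7 {α : Type} [DecidableEq α] [LinearOrder α] (T : Finset α)
    (pr : α → ℤ) (q : α → ℕ) (hq : ∀ i, 0 < q i)
    (X : Finset α) (hXT : X ⊆ T) (z : α) (hzT : z ∈ T)
    (hz : ∀ x ∈ X, x < z) :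
    puT pr q (insert z X) + rpuT T pr q (insert z X) ≤
      puT pr q X + rpuT T pr q X :=
  stmt7_general T pr q X z hzT hz
end

section
/- Correctness of threshold filtering for single items: any potential high-utility itemset (PHUI) consists only of items i satisfying Pro({i}) ≥ minPro·|D| and RTWU({i}) ≥ minUtil. -/
/-!
`Pro` and `RTWU` are antitone in the itemset: enlarging `X` shrinks the set of transactions
containing it, and the summands (products of probabilities `≤ 1`, remaining utilities `≥ 0`)
only decrease. Moreover `u(X) ≤ RTWU(X)`, since in each transaction `T ⊇ X` the utility of `X`
is at most the sum of the positive utilities of all items of `T`. Applying this to `{i} ⊆ X`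
transfers both PHUI thresholds from `X` to `{i}`.
-/

open Finset

def utilT {α ι : Type} (pr : α → ℤ) (q : α → ι → ℕ) (X : Finset α) (t : ι) : ℤ :=
  ∑ i ∈ X, pr i * (q i t : ℤ)

def totU {α ι : Type} [DecidableEq α] (D : Finset ι) (Trans : ι → Finset α)
    (pr : α → ℤ) (q : α → ι → ℕ) (X : Finset α) : ℤ :=
  ∑ t ∈ D.filter (fun t => X ⊆ Trans t), utilT pr q X t

def RTU {α ι : Type} [DecidableEq α] (Trans : ι → Finset α)
    (pr : α → ℤ) (q : α → ι → ℕ) (t : ι) : ℤ :=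
  ∑ i ∈ (Trans t).filter (fun i => 0 < pr i), pr i * (q i t : ℤ)

def RTWU {α ι : Type} [DecidableEq α] (D : Finset ι) (Trans : ι → Finset α)
    (pr : α → ℤ) (q : α → ι → ℕ) (X : Finset α) : ℤ :=
  ∑ t ∈ D.filter (fun t => X ⊆ Trans t), RTU Trans pr q t

def Pro {α ι : Type} [DecidableEq α] (D : Finset ι) (Trans : ι → Finset α)
    (p : α → ι → ℝ) (X : Finset α) : ℝ :=
  ∑ t ∈ D.filter (fun t => X ⊆ Trans t), ∏ i ∈ X, p i t

/-- `X` is a potential high-utility itemset. -/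
def PHUI {α ι : Type} [DecidableEq α] (D : Finset ι) (Trans : ι → Finset α)
    (pr : α → ℤ) (q : α → ι → ℕ) (p : α → ι → ℝ) (minUtil : ℤ) (minPro : ℝ)
    (X : Finset α) : Prop :=
  minUtil ≤ totU D Trans pr q X ∧ minPro * D.card ≤ Pro D Trans p X

section

variable {α ι : Type} [DecidableEq α] (D : Finset ι) (Trans : ι → Finset α)

lemma filter_containing_subset_of_subset {X Y : Finset α} (hYX : Y ⊆ X) :
    D.filter (fun t => X ⊆ Trans t) ⊆ D.filter (fun t => Y ⊆ Trans t) :=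
  monotone_filter_right D fun _ _ hX => hYX.trans hX

lemma pro_antitone {p : α → ι → ℝ} (hp : ∀ i t, 0 ≤ p i t ∧ p i t ≤ 1) :
    Antitone (Pro D Trans p) := by
  intro Y X hYX
  calc ∑ t ∈ D.filter (fun t => X ⊆ Trans t), ∏ i ∈ X, p i t
      ≤ ∑ t ∈ D.filter (fun t => X ⊆ Trans t), ∏ i ∈ Y, p i t :=
        sum_le_sum fun t _ =>
          prod_anti_set_of_le_one (fun i => (hp i t).1) (fun i => (hp i t).2) hYX
    _ ≤ ∑ t ∈ D.filter (fun t => Y ⊆ Trans t), ∏ i ∈ Y, p i t :=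
        sum_le_sum_of_subset_of_nonneg (filter_containing_subset_of_subset D Trans hYX)
          fun t _ _ => prod_nonneg fun i _ => (hp i t).1

variable (pr : α → ℤ) (q : α → ι → ℕ)

lemma rtu_nonneg (t : ι) : 0 ≤ RTU Trans pr q t :=
  sum_nonneg fun i hi => by
    have := (mem_filter.mp hi).2
    positivity

lemma rtwu_antitone : Antitone (RTWU D Trans pr q) := fun _ _ hYX =>
  sum_le_sum_of_subset_of_nonneg (filter_containing_subset_of_subset D Trans hYX)
    fun t _ _ => rtu_nonneg Trans pr q t

lemma utilT_le_rtu {X : Finset α} {t : ι} (hX : X ⊆ Trans t) :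
    utilT pr q X t ≤ RTU Trans pr q t := by
  have drop_nonpos : ∀ j, pr j * (q j t : ℤ) ≤ if 0 < pr j then pr j * (q j t : ℤ) else 0 := by
    intro j
    split_ifs with hj
    · exact le_rfl
    · exact mul_nonpos_of_nonpos_of_nonneg (not_lt.mp hj) (Int.natCast_nonneg _)
  calc utilT pr q X t ≤ ∑ j ∈ X.filter (fun j => 0 < pr j), pr j * (q j t : ℤ) := by
        rw [sum_filter]
        exact sum_le_sum fun j _ => drop_nonpos j
    _ ≤ RTU Trans pr q t :=
        sum_le_sum_of_subset_of_nonneg (filter_subset_filter _ hX) fun j hj _ => by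
          have := (mem_filter.mp hj).2
          positivity

lemma totU_le_rtwu (X : Finset α) : totU D Trans pr q X ≤ RTWU D Trans pr q X :=
  sum_le_sum fun _ ht => utilT_le_rtu Trans pr q (mem_filter.mp ht).2

end

theorem stmt18_general {α ι : Type} [DecidableEq α] (D : Finset ι) (Trans : ι → Finset α)
    (pr : α → ℤ) (q : α → ι → ℕ)
    (p : α → ι → ℝ) (hp : ∀ i t, 0 ≤ p i t ∧ p i t ≤ 1)
    (minUtil : ℤ) (minPro : ℝ) (X : Finset α)
    (hX : PHUI D Trans pr q p minUtil minPro X) :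
    ∀ i ∈ X, minPro * D.card ≤ Pro D Trans p {i} ∧ minUtil ≤ RTWU D Trans pr q {i} := by
  intro i hi
  have hiX : {i} ⊆ X := singleton_subset_iff.mpr hi
  exact ⟨hX.2.trans (pro_antitone D Trans hp hiX),
    (hX.1.trans (totU_le_rtwu D Trans pr q X)).trans (rtwu_antitone D Trans pr q hiX)⟩

/-- Every item of a PHUI passes the singleton probability and RTWU thresholds. -/
theorem stmt18 {α ι : Type} [DecidableEq α] (D : Finset ι) (Trans : ι → Finset α)
    (pr : α → ℤ) (q : α → ι → ℕ) (hq : ∀ i t, 0 < q i t)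
    (p : α → ι → ℝ) (hp : ∀ i t, 0 ≤ p i t ∧ p i t ≤ 1)
    (minUtil : ℤ) (minPro : ℝ) (X : Finset α)
    (hX : PHUI D Trans pr q p minUtil minPro X) :
    ∀ i ∈ X, minPro * D.card ≤ Pro D Trans p {i} ∧ minUtil ≤ RTWU D Trans pr q {i} :=
  stmt18_general D Trans pr q p hp minUtil minPro X hX
end
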